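/- arXiv:2204.02879 — 2 statements merged into one kernel-verified Lean document; each statement's English description precedes it below -/
import Mathlib

section
/- Let B(n,k) be the number of partitions with perimeter n having exactly k even parts. Then for all n ≥ 3 and k ≥ 1, B(n,k) = B(n−1,k) + B(n−1,k−1) + B(n−2,k) − B(n−2,k−1). -/
/-- A partition: a nonempty weakly decreasing list of positive integers. -/
def IsPartition (l : List ℕ) : Prop :=
  l ≠ [] ∧ l.Pairwise (· ≥ ·) ∧ ∀ x ∈ l, 0 < x

/-- The perimeter of a partition: largest part plus number of parts minus 1. -/
def perim (l : List ℕ) : ℕ := l.headI + l.length - 1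

/-- Number of repeated parts: indices i with λ_i = λ_{i+1}. -/
def repStat (l : List ℕ) : ℕ :=
  ((List.range (l.length - 1)).filter fun i => l.getD i 0 = l.getD (i + 1) 0).length

/-- Number of even parts. -/
def evenStat (l : List ℕ) : ℕ := l.countP fun x => x % 2 = 0
/-- B(n,k): number of partitions with perimeter n and exactly k even parts. -/
noncomputable def B (n k : ℕ) : ℕ :=
  {l : List ℕ | IsPartition l ∧ perim l = n ∧ evenStat l = k}.ncard

/-!
Split the partitions counted by `B n k` according to the parity of the largest part, into
`evenTop n k` and `oddTop n k` of sizes `E n k` and `O n k`. Every partition other than `(1)`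
arises in exactly one way from a partition of perimeter one less, either by raising its largest
part by one (which flips the parity of that part) or by repeating its largest part (which adds a
part of the same parity). Hence `E (n+1) (k+1) = O n k + E n k = B n k` and
`O (n+2) k = E (n+1) (k+1) + O (n+1) k`, and eliminating `O` from `B = E + O` gives the
recurrence.
-/

theorem isPartition_cons_iff {a : ℕ} {t : List ℕ} :
    IsPartition (a :: t) ↔ 0 < a ∧ t.headI ≤ a ∧ (t = [] ∨ IsPartition t) := by
  rcases t with _ | ⟨b, u⟩
  · simp [IsPartition]
  · simp only [IsPartition, List.pairwise_cons, List.mem_cons, forall_eq_or_imp, List.headI,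
      ne_eq, reduceCtorEq, not_false_eq_true, true_and, false_or]
    constructor
    · rintro ⟨⟨⟨hba, -⟩, hbu, hu⟩, ha, hb, hpos⟩
      exact ⟨ha, hba, ⟨hbu, hu⟩, hb, hpos⟩
    · rintro ⟨ha, hba, ⟨hbu, hu⟩, hb, hpos⟩
      exact ⟨⟨⟨hba, fun x hx => (hbu x hx).trans hba⟩, hbu, hu⟩, ha, hb, hpos⟩

theorem IsPartition.ne_nil {l : List ℕ} (hl : IsPartition l) : l ≠ [] := hl.1

theorem IsPartition.headI_pos {l : List ℕ} (hl : IsPartition l) : 0 < l.headI := by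
  obtain ⟨a, t, rfl⟩ := List.exists_cons_of_ne_nil hl.ne_nil
  exact (isPartition_cons_iff.1 hl).1

theorem IsPartition.le_headI {l : List ℕ} (hl : IsPartition l) {x : ℕ} (hx : x ∈ l) :
    x ≤ l.headI := by
  obtain ⟨a, t, rfl⟩ := List.exists_cons_of_ne_nil hl.ne_nil
  rcases List.mem_cons.1 hx with rfl | hx
  · exact le_rfl
  · exact List.rel_of_pairwise_cons hl.2.1 hx

@[simp] theorem perim_cons (a : ℕ) (t : List ℕ) : perim (a :: t) = a + t.length := by
  simp [perim]

theorem evenStat_cons (a : ℕ) (t : List ℕ) :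
    evenStat (a :: t) = evenStat t + if a % 2 = 0 then 1 else 0 := by
  simp [evenStat, List.countP_cons]

theorem finite_setOf_isPartition_perim_eq (n : ℕ) :
    {l : List ℕ | IsPartition l ∧ perim l = n}.Finite := by
  refine ((List.finite_length_le (Fin (n + 1)) (n + 1)).image (List.map Fin.val)).subset ?_
  rintro l ⟨hl, hper⟩
  have hper : l.headI + l.length - 1 = n := hper
  have hlt : ∀ x ∈ l, x < n + 1 := fun x hx => by
    have := hl.le_headI hx
    have := List.length_pos_of_mem hx
    omega
  lift l to List (Fin (n + 1)) using hlt
  rw [List.length_map] at hper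
  exact ⟨l, show l.length ≤ n + 1 by omega, rfl⟩

namespace PerimeterPartition

def incrHead (l : List ℕ) : List ℕ := (l.headI + 1) :: l.tail

def dupHead (l : List ℕ) : List ℕ := l.headI :: l

@[simp] theorem incrHead_cons (a : ℕ) (t : List ℕ) : incrHead (a :: t) = (a + 1) :: t := rfl

@[simp] theorem dupHead_cons (a : ℕ) (t : List ℕ) : dupHead (a :: t) = a :: a :: t := rfl

theorem headI_incrHead (l : List ℕ) : (incrHead l).headI = l.headI + 1 := rfl

theorem headI_dupHead (l : List ℕ) : (dupHead l).headI = l.headI := rfl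

theorem perim_incrHead {l : List ℕ} (hl : l ≠ []) : perim (incrHead l) = perim l + 1 := by
  obtain ⟨a, t, rfl⟩ := List.exists_cons_of_ne_nil hl
  simp only [incrHead_cons, perim_cons]
  omega

theorem perim_dupHead {l : List ℕ} (hl : l ≠ []) : perim (dupHead l) = perim l + 1 := by
  obtain ⟨a, t, rfl⟩ := List.exists_cons_of_ne_nil hl
  simp only [dupHead_cons, perim_cons, List.length_cons]
  omega

theorem evenStat_incrHead {l : List ℕ} (hl : l ≠ []) :
    evenStat (incrHead l) + 1 = evenStat l + 2 * (l.headI % 2) := by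
  obtain ⟨a, t, rfl⟩ := List.exists_cons_of_ne_nil hl
  simp only [incrHead_cons, evenStat_cons, List.headI]
  split_ifs <;> omega

theorem evenStat_dupHead (l : List ℕ) : evenStat (dupHead l) + l.headI % 2 = evenStat l + 1 := by
  rw [dupHead, evenStat_cons]
  split_ifs <;> omega

theorem isPartition_incrHead {l : List ℕ} (hl : IsPartition l) : IsPartition (incrHead l) := by
  obtain ⟨a, t, rfl⟩ := List.exists_cons_of_ne_nil hl.ne_nil
  obtain ⟨-, hta, ht⟩ := isPartition_cons_iff.1 hl
  exact isPartition_cons_iff.2 ⟨a.succ_pos, hta.trans a.le_succ, ht⟩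

theorem isPartition_dupHead {l : List ℕ} (hl : IsPartition l) : IsPartition (dupHead l) := by
  obtain ⟨a, t, rfl⟩ := List.exists_cons_of_ne_nil hl.ne_nil
  exact isPartition_cons_iff.2 ⟨(isPartition_cons_iff.1 hl).1, le_rfl, Or.inr hl⟩

theorem exists_incrHead_or_dupHead_eq {l : List ℕ} (hl : IsPartition l) (h1 : l ≠ [1]) :
    (∃ m, IsPartition m ∧ incrHead m = l) ∨ ∃ m, IsPartition m ∧ dupHead m = l := by
  obtain ⟨b, t, rfl⟩ := List.exists_cons_of_ne_nil hl.ne_nil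
  obtain ⟨hb, htb, ht⟩ := isPartition_cons_iff.1 hl
  rcases htb.lt_or_eq with htb | htb
  · have hb2 : 2 ≤ b := by
      rcases ht with rfl | ht
      · by_contra hb2
        exact h1 (by rw [show b = 1 by omega])
      · have := ht.headI_pos
        omega
    refine Or.inl ⟨(b - 1) :: t, isPartition_cons_iff.2 ⟨by omega, by omega, ht⟩, ?_⟩
    rw [incrHead_cons, Nat.sub_add_cancel (by omega : 1 ≤ b)]
  · have ht : IsPartition t := ht.resolve_left (by rintro rfl; simp at htb; omega)
    obtain ⟨c, u, rfl⟩ := List.exists_cons_of_ne_nil ht.ne_nil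
    simp only [List.headI] at htb
    exact Or.inr ⟨c :: u, ht, by rw [dupHead_cons, htb]⟩

theorem incrHead_injOn : Set.InjOn incrHead {l | l ≠ []} := by
  rintro l hl m hm h
  obtain ⟨a, t, rfl⟩ := List.exists_cons_of_ne_nil hl
  obtain ⟨b, u, rfl⟩ := List.exists_cons_of_ne_nil hm
  simp only [incrHead_cons, List.cons.injEq, Nat.add_right_cancel_iff] at h
  rw [h.1, h.2]

theorem dupHead_injective : Function.Injective dupHead :=
  fun _ _ h => (List.cons_eq_cons.1 h).2

theorem incrHead_ne_dupHead {l : List ℕ} (hl : IsPartition l) (m : List ℕ) :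
    incrHead l ≠ dupHead m := by
  obtain ⟨a, t, rfl⟩ := List.exists_cons_of_ne_nil hl.ne_nil
  rw [incrHead_cons, dupHead, Ne, List.cons_eq_cons]
  rintro ⟨ha, rfl⟩
  have := (isPartition_cons_iff.1 hl).2.1
  omega

theorem ncard_eq_ncard_preimage_incrHead_add {S : Set (List ℕ)} (hS : ∀ l ∈ S, IsPartition l)
    (h1 : [1] ∉ S) (hSf : S.Finite) :
    S.ncard = ({m | IsPartition m} ∩ incrHead ⁻¹' S).ncard +
      ({m | IsPartition m} ∩ dupHead ⁻¹' S).ncard := by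
  set A := {m | IsPartition m} ∩ incrHead ⁻¹' S
  set C := {m | IsPartition m} ∩ dupHead ⁻¹' S
  have hS_eq : S = incrHead '' A ∪ dupHead '' C := by
    refine subset_antisymm (fun l hl => ?_) (Set.union_subset ?_ ?_)
    · rcases exists_incrHead_or_dupHead_eq (hS l hl) (by rintro rfl; exact h1 hl) with
        ⟨m, hm, rfl⟩ | ⟨m, hm, rfl⟩
      · exact Or.inl ⟨m, ⟨hm, hl⟩, rfl⟩
      · exact Or.inr ⟨m, ⟨hm, hl⟩, rfl⟩
    · exact (Set.image_mono Set.inter_subset_right).trans (Set.image_preimage_subset _ _)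
    · exact (Set.image_mono Set.inter_subset_right).trans (Set.image_preimage_subset _ _)
  have hdisj : Disjoint (incrHead '' A) (dupHead '' C) := by
    rw [Set.disjoint_left]
    rintro _ ⟨m, ⟨hm, -⟩, rfl⟩ ⟨m', -, h⟩
    exact incrHead_ne_dupHead hm m' h.symm
  have hinj : Set.InjOn incrHead A := incrHead_injOn.mono fun m hm => hm.1.ne_nil
  conv_lhs => rw [hS_eq]
  rw [Set.ncard_union_eq hdisj (hSf.subset (hS_eq ▸ Set.subset_union_left))
      (hSf.subset (hS_eq ▸ Set.subset_union_right)),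
    hinj.ncard_image, Set.ncard_image_of_injective _ dupHead_injective]

def evenTop (n k : ℕ) : Set (List ℕ) :=
  {l | IsPartition l ∧ perim l = n ∧ evenStat l = k ∧ l.headI % 2 = 0}

def oddTop (n k : ℕ) : Set (List ℕ) :=
  {l | IsPartition l ∧ perim l = n ∧ evenStat l = k ∧ l.headI % 2 = 1}

theorem evenTop_finite (n k : ℕ) : (evenTop n k).Finite :=
  (finite_setOf_isPartition_perim_eq n).subset fun _ hl => ⟨hl.1, hl.2.1⟩

theorem oddTop_finite (n k : ℕ) : (oddTop n k).Finite :=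
  (finite_setOf_isPartition_perim_eq n).subset fun _ hl => ⟨hl.1, hl.2.1⟩

theorem B_eq_ncard_evenTop_add_ncard_oddTop (n k : ℕ) :
    B n k = (evenTop n k).ncard + (oddTop n k).ncard := by
  have hsplit :
      {l | IsPartition l ∧ perim l = n ∧ evenStat l = k} = evenTop n k ∪ oddTop n k := by
    ext l
    have := Nat.mod_two_eq_zero_or_one l.headI
    simp only [evenTop, oddTop, Set.mem_union, Set.mem_ofPred_eq]
    tauto
  have hdisj : Disjoint (evenTop n k) (oddTop n k) :=
    Set.disjoint_left.2 fun l hl hl' => by have := hl.2.2.2; have := hl'.2.2.2; omega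
  rw [B, hsplit, Set.ncard_union_eq hdisj (evenTop_finite n k) (oddTop_finite n k)]

theorem preimage_incrHead_evenTop (n k : ℕ) :
    {m | IsPartition m} ∩ incrHead ⁻¹' evenTop (n + 1) (k + 1) = oddTop n k :=
  Set.ext fun m => and_congr_right fun hm => by
    have := perim_incrHead hm.ne_nil
    have := evenStat_incrHead hm.ne_nil
    simp only [Set.mem_preimage, evenTop, Set.mem_ofPred_eq, isPartition_incrHead hm,
      headI_incrHead, true_and]
    omega

theorem preimage_dupHead_evenTop (n k : ℕ) :
    {m | IsPartition m} ∩ dupHead ⁻¹' evenTop (n + 1) (k + 1) = evenTop n k :=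
  Set.ext fun m => and_congr_right fun hm => by
    have := perim_dupHead hm.ne_nil
    have := evenStat_dupHead m
    simp only [Set.mem_preimage, evenTop, Set.mem_ofPred_eq, isPartition_dupHead hm,
      headI_dupHead, true_and]
    omega

theorem preimage_incrHead_oddTop (n k : ℕ) :
    {m | IsPartition m} ∩ incrHead ⁻¹' oddTop (n + 1) k = evenTop n (k + 1) :=
  Set.ext fun m => and_congr_right fun hm => by
    have := perim_incrHead hm.ne_nil
    have := evenStat_incrHead hm.ne_nil
    simp only [Set.mem_preimage, oddTop, Set.mem_ofPred_eq, isPartition_incrHead hm,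
      headI_incrHead, true_and]
    omega

theorem preimage_dupHead_oddTop (n k : ℕ) :
    {m | IsPartition m} ∩ dupHead ⁻¹' oddTop (n + 1) k = oddTop n k :=
  Set.ext fun m => and_congr_right fun hm => by
    have := perim_dupHead hm.ne_nil
    have := evenStat_dupHead m
    simp only [Set.mem_preimage, oddTop, Set.mem_ofPred_eq, isPartition_dupHead hm,
      headI_dupHead, true_and]
    omega

theorem ncard_evenTop_add_one (n k : ℕ) : (evenTop (n + 1) (k + 1)).ncard = B n k := by
  rw [ncard_eq_ncard_preimage_incrHead_add (fun _ hl => hl.1) (fun h => absurd h.2.2.2 (by decide))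
      (evenTop_finite _ _), preimage_incrHead_evenTop, preimage_dupHead_evenTop,
    B_eq_ncard_evenTop_add_ncard_oddTop, add_comm]

theorem ncard_oddTop_add_two (n k : ℕ) :
    (oddTop (n + 2) k).ncard = B n k + (oddTop (n + 1) k).ncard := by
  rw [ncard_eq_ncard_preimage_incrHead_add (fun _ hl => hl.1) (fun h => absurd h.2.1 (by simp))
      (oddTop_finite _ _), preimage_incrHead_oddTop, preimage_dupHead_oddTop,
    ncard_evenTop_add_one]

end PerimeterPartition

open PerimeterPartition in
theorem B_recurrence (n k : ℕ) (hn : 3 ≤ n) (hk : 1 ≤ k) :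
    (B n k : ℤ) =
      B (n - 1) k + B (n - 1) (k - 1) + B (n - 2) k - B (n - 2) (k - 1) := by
  obtain ⟨n, rfl⟩ : ∃ m, n = m + 3 := ⟨n - 3, by omega⟩
  obtain ⟨k, rfl⟩ : ∃ j, k = j + 1 := ⟨k - 1, by omega⟩
  show (B (n + 3) (k + 1) : ℤ) =
    B (n + 2) (k + 1) + B (n + 2) k + B (n + 1) (k + 1) - B (n + 1) k
  have h1 := B_eq_ncard_evenTop_add_ncard_oddTop (n + 3) (k + 1)
  have h2 := B_eq_ncard_evenTop_add_ncard_oddTop (n + 2) (k + 1)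
  have h3 : (evenTop (n + 3) (k + 1)).ncard = B (n + 2) k := ncard_evenTop_add_one (n + 2) k
  have h4 : (evenTop (n + 2) (k + 1)).ncard = B (n + 1) k := ncard_evenTop_add_one (n + 1) k
  have h5 : (oddTop (n + 3) (k + 1)).ncard = B (n + 1) (k + 1) + (oddTop (n + 2) (k + 1)).ncard :=
    ncard_oddTop_add_two (n + 1) (k + 1)
  omega
end

section
/- For each n ≥ 1, |Σ_{λ ∈ H_n} (−1)^{ℓ(λ)} 2^{rep(λ)}| = F_n, the n-th Fibonacci number (F₁ = F₂ = 1, F_n = F_{n−1} + F_{n−2}). -/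
/-!
Peel off the last part. A partition of perimeter `n + 1` either ends in a part `1`, whose removal
leaves a partition of perimeter `n`, or has all parts at least `2`, and lowering every part by one
leaves a partition of perimeter `n`. Lowering keeps the length and `rep`; removing a final `1`
lowers the length by one, and `rep` by one exactly when the remaining partition also ends in `1`.
Hence, for the weight `w λ = (-1)^ℓ(λ) 2^rep(λ)`, the sums `S n = ∑_{H n} w λ` and
`T n = ∑_{H n} w (λ ++ [1])` satisfy `S (n+1) = S n + T n` and `T (n+1) = -2 T n - S n`, which
solve to `S n = (-1)^n F n` and `T n = (-1)^(n+1) F (n+2)`.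
-/

theorem repStat_cons (a : ℕ) (l : List ℕ) :
    repStat (a :: l) = repStat l + if l.head? = some a then 1 else 0 := by
  rcases l with _ | ⟨b, s⟩
  · simp [repStat]
  · simp only [repStat, List.length_cons, Nat.add_sub_cancel, List.range_succ_eq_map,
      List.filter_cons, List.filter_map, Function.comp_def, Nat.succ_eq_add_one,
      List.getD_cons_succ, List.getD_cons_zero, List.head?_cons, Option.some.injEq]
    split <;> simp_all [eq_comm]

theorem repStat_map {f : ℕ → ℕ} (hf : f.Injective) (l : List ℕ) :
    repStat (l.map f) = repStat l := by
  induction l with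
  | nil => rfl
  | cons a l ih => simp [repStat_cons, ih, List.head?_map, hf.eq_iff]

theorem repStat_append_singleton (l : List ℕ) (b : ℕ) :
    repStat (l ++ [b]) = repStat l + if l.getLast? = some b then 1 else 0 := by
  induction l with
  | nil => simp [repStat]
  | cons a l ih =>
    rcases l with _ | ⟨c, s⟩
    · simp [repStat_cons, eq_comm]
    · rw [List.cons_append, repStat_cons, ih, repStat_cons a]
      simp only [List.cons_append, List.head?_cons, List.getLast?_cons_cons, Option.some.injEq]
      omega

def partitionsWithPerim (n : ℕ) : Set (List ℕ) := {l | IsPartition l ∧ perim l = n}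

theorem perim_append_singleton {l : List ℕ} (hl : l ≠ []) (b : ℕ) :
    perim (l ++ [b]) = perim l + 1 := by
  obtain ⟨a, t, rfl⟩ := List.exists_cons_of_ne_nil hl
  simp [perim]
  omega

theorem perim_map_add_one {l : List ℕ} (hl : l ≠ []) :
    perim (l.map (· + 1)) = perim l + 1 := by
  obtain ⟨a, t, rfl⟩ := List.exists_cons_of_ne_nil hl
  simp only [perim, List.map_cons, List.headI_cons, List.length_cons, List.length_map]
  omega

theorem IsPartition.append_one {l : List ℕ} (hl : IsPartition l) : IsPartition (l ++ [1]) := by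
  obtain ⟨-, hdec, hpos⟩ := hl
  refine ⟨by simp, List.pairwise_append.2 ⟨hdec, by simp, ?_⟩, ?_⟩
  · exact fun a ha b hb => (List.mem_singleton.1 hb) ▸ hpos a ha
  · simpa [or_imp, forall_and] using hpos

theorem IsPartition.map_add_one {l : List ℕ} (hl : IsPartition l) :
    IsPartition (l.map (· + 1)) := by
  obtain ⟨hne, hdec, -⟩ := hl
  exact ⟨by simpa using hne, List.pairwise_map.2 (hdec.imp (by omega)), by simp⟩

theorem partitionsWithPerim_one : partitionsWithPerim 1 = {[1]} := by
  ext l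
  constructor
  · rintro ⟨⟨hne, -, hpos⟩, hper⟩
    obtain ⟨a, t, rfl⟩ := List.exists_cons_of_ne_nil hne
    have ha := hpos a (by simp)
    rcases t with _ | ⟨b, s⟩
    · simp [perim] at hper ⊢; omega
    · simp [perim] at hper; omega
  · rintro rfl
    exact ⟨⟨by simp, by simp, by simp⟩, rfl⟩

theorem IsPartition.of_append_singleton {l : List ℕ} {b : ℕ} (h : IsPartition (l ++ [b]))
    (hl : l ≠ []) : IsPartition l :=
  ⟨hl, (List.pairwise_append.1 h.2.1).1, fun y hy => h.2.2 y (List.mem_append_left _ hy)⟩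

theorem IsPartition.map_sub_one {l : List ℕ} (hl : IsPartition l) (h : ∀ y ∈ l, 2 ≤ y) :
    IsPartition (l.map (· - 1)) :=
  ⟨by simpa using hl.1, List.pairwise_map.2 (hl.2.1.imp (by omega)),
    List.forall_mem_map.2 fun y hy => by have := h y hy; omega⟩

theorem map_add_one_map_sub_one {l : List ℕ} (h : ∀ y ∈ l, 1 ≤ y) :
    (l.map (· - 1)).map (· + 1) = l := by
  rw [List.map_map]
  exact (List.map_congr_left fun y hy => by have := h y hy; simp; omega).trans (List.map_id l)

theorem partitionsWithPerim_succ {n : ℕ} (hn : 1 ≤ n) :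
    partitionsWithPerim (n + 1) =
      (· ++ [1]) '' partitionsWithPerim n ∪ List.map (· + 1) '' partitionsWithPerim n := by
  ext l
  constructor
  · rintro ⟨hl, hper⟩
    obtain ⟨l', x, rfl⟩ := (List.eq_nil_or_concat l).resolve_left hl.1
    rw [List.concat_eq_append] at hl hper ⊢
    by_cases hx : x = 1
    · subst hx
      have hne : l' ≠ [] := by rintro rfl; simp [perim] at hper; omega
      rw [perim_append_singleton hne] at hper
      exact Or.inl ⟨l', ⟨hl.of_append_singleton hne, by omega⟩, rfl⟩
    · have hge : ∀ y ∈ l' ++ [x], 2 ≤ y := by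
        have hx1 := hl.2.2 x (by simp)
        intro y hy
        rcases List.mem_append.1 hy with hy | hy
        · have := (List.pairwise_append.1 hl.2.1).2.2 y hy x (by simp); omega
        · simp at hy; omega
      have hmap := map_add_one_map_sub_one fun y hy => (hge y hy).trans' one_le_two
      have hper' := perim_map_add_one (l := (l' ++ [x]).map (· - 1)) (by simp)
      rw [hmap] at hper'
      exact Or.inr ⟨_, ⟨hl.map_sub_one hge, by omega⟩, hmap⟩
  · rintro (⟨l, ⟨hl, rfl⟩, rfl⟩ | ⟨l, ⟨hl, rfl⟩, rfl⟩)
    · exact ⟨hl.append_one, perim_append_singleton hl.1 1⟩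
    · exact ⟨hl.map_add_one, perim_map_add_one hl.1⟩

theorem finite_partitionsWithPerim {n : ℕ} (hn : 1 ≤ n) : (partitionsWithPerim n).Finite := by
  induction n, hn using Nat.le_induction with
  | base => simp [partitionsWithPerim_one]
  | succ n hn ih =>
    rw [partitionsWithPerim_succ hn]
    exact (ih.image _).union (ih.image _)

theorem finsum_mem_partitionsWithPerim_succ {M : Type*} [AddCommMonoid M] {n : ℕ} (hn : 1 ≤ n)
    (f : List ℕ → M) :
    ∑ᶠ l ∈ partitionsWithPerim (n + 1), f l =
      ∑ᶠ l ∈ partitionsWithPerim n, f (l ++ [1]) +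
        ∑ᶠ l ∈ partitionsWithPerim n, f (l.map (· + 1)) := by
  have hfin := finite_partitionsWithPerim hn
  have hdisj : Disjoint ((· ++ [1]) '' partitionsWithPerim n)
      (List.map (· + 1) '' partitionsWithPerim n) := by
    refine Set.disjoint_left.2 ?_
    rintro _ ⟨l, -, rfl⟩ ⟨l', ⟨hl', -⟩, h⟩
    have : 1 ∈ l'.map (· + 1) := h ▸ List.mem_append_right l (List.mem_singleton_self 1)
    obtain ⟨y, hy, hy1⟩ := List.mem_map.1 this
    exact (hl'.2.2 y hy).ne' (by omega)
  rw [partitionsWithPerim_succ hn, finsum_mem_union hdisj (hfin.image _) (hfin.image _),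
    finsum_mem_image (fun _ _ _ _ => List.append_cancel_right),
    finsum_mem_image (List.map_injective_iff.2 (add_left_injective 1)).injOn]

def signedWeight (l : List ℕ) : ℤ := (-1) ^ l.length * 2 ^ repStat l

theorem signedWeight_map {f : ℕ → ℕ} (hf : f.Injective) (l : List ℕ) :
    signedWeight (l.map f) = signedWeight l := by
  simp [signedWeight, repStat_map hf]

theorem signedWeight_append_singleton (l : List ℕ) (b : ℕ) :
    signedWeight (l ++ [b]) = -(if l.getLast? = some b then 2 else 1) * signedWeight l := by
  simp only [signedWeight, repStat_append_singleton, List.length_append, List.length_singleton]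
  split <;> ring

theorem finsum_signedWeight_partitionsWithPerim {n : ℕ} (hn : 1 ≤ n) :
    ∑ᶠ l ∈ partitionsWithPerim n, signedWeight l = (-1) ^ n * Nat.fib n ∧
      ∑ᶠ l ∈ partitionsWithPerim n, signedWeight (l ++ [1]) =
        (-1) ^ (n + 1) * Nat.fib (n + 2) := by
  induction n, hn using Nat.le_induction with
  | base => simp [partitionsWithPerim_one, signedWeight, repStat, Nat.fib_add_two]
  | succ n hn ih =>
    obtain ⟨hS, hT⟩ := ih
    have hsucc : Function.Injective (· + 1 : ℕ → ℕ) := add_left_injective 1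
    have happend : ∑ᶠ l ∈ partitionsWithPerim n, signedWeight (l ++ [1] ++ [1]) =
        -2 * ∑ᶠ l ∈ partitionsWithPerim n, signedWeight (l ++ [1]) := by
      rw [mul_finsum_mem]
      refine finsum_mem_congr rfl fun l _ => ?_
      rw [signedWeight_append_singleton (l ++ [1])]
      simp
    have hshift : ∑ᶠ l ∈ partitionsWithPerim n, signedWeight (l.map (· + 1) ++ [1]) =
        -1 * ∑ᶠ l ∈ partitionsWithPerim n, signedWeight l := by
      rw [mul_finsum_mem]
      refine finsum_mem_congr rfl fun l hl => ?_
      have : l.getLast? ≠ some 0 := fun h => (hl.1.2.2 0 (List.mem_of_getLast? h)).false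
      simp [signedWeight_append_singleton, this, signedWeight_map hsucc]
    simp only [finsum_mem_partitionsWithPerim_succ hn, signedWeight_map hsucc, happend, hshift,
      hS, hT]
    have hfib := Nat.fib_add_two (n := n)
    have hfib' := Nat.fib_add_two (n := n + 1)
    constructor <;> push_cast [hfib', hfib] <;> ring

theorem h_at_two_fibonacci (n : ℕ) (hn : 1 ≤ n) :
    (∑ᶠ l ∈ {l : List ℕ | IsPartition l ∧ perim l = n},
        ((-1 : ℤ) ^ l.length * 2 ^ repStat l)).natAbs = Nat.fib n := by
  change (∑ᶠ l ∈ partitionsWithPerim n, signedWeight l).natAbs = _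
  rw [(finsum_signedWeight_partitionsWithPerim hn).1, Int.natAbs_mul, Int.natAbs_pow]
  simp
end
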